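/- arXiv:2305.15201 — 4 statements merged into one kernel-verified Lean document; each statement's English description precedes it below -/
import Mathlib

section
/- For any λ > 0 and integer D ≥ 0, the function g(γ) = 1/(2λ) + γλ^{2D+2}/(λ²+γ²)^{D+2} on ℝ attains its global maximum at γ* = λ/√(2D+3). -/
open Real

lemma key_amgm (n : ℕ) (hn : 1 ≤ n) (t : ℝ) (ht : 0 ≤ t) :
    (2 * n : ℝ) ^ n * t ≤ (2 * n - 1 + t ^ 2) ^ n := by
  have hn1 : (1 : ℝ) ≤ n := by exact_mod_cast hn
  have h2n : (0 : ℝ) < 2 * n := by linarith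
  set w₂ : ℝ := 1 / (2 * n) with hw₂def
  have hw₂ : 0 ≤ w₂ := by positivity
  have hw₂le : w₂ ≤ 1 / 2 := by
    rw [hw₂def]
    apply div_le_div_of_nonneg_left (by norm_num) (by norm_num) (by linarith)
  have hw₁ : 0 ≤ 1 - w₂ := by linarith
  have hgm := Real.geom_mean_le_arith_mean2_weighted hw₁ hw₂ zero_le_one (sq_nonneg t)
    (by ring)
  rw [Real.one_rpow, one_mul, mul_one] at hgm
  -- hgm : (t^2) ^ w₂ ≤ (1 - w₂) + w₂ * t^2
  have hbase : (0:ℝ) ≤ (t ^ 2) ^ w₂ := Real.rpow_nonneg (sq_nonneg t) _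
  have hpow := Real.rpow_le_rpow hbase hgm (le_of_lt (by positivity : (0:ℝ) < (n:ℝ)))
  have hLHS : ((t ^ 2) ^ w₂) ^ (n : ℝ) = t := by
    rw [← Real.rpow_mul (sq_nonneg t)]
    have : w₂ * n = 1 / 2 := by
      rw [hw₂def]; field_simp
    rw [this, ← Real.sqrt_eq_rpow, Real.sqrt_sq ht]
  have hRHS : ((1 - w₂) + w₂ * t ^ 2) ^ (n : ℝ) = ((2 * n - 1 + t ^ 2) / (2 * n)) ^ n := by
    rw [Real.rpow_natCast]
    congr 1
    rw [hw₂def]; field_simp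
  rw [hLHS, hRHS] at hpow
  calc (2 * n : ℝ) ^ n * t ≤ (2 * n : ℝ) ^ n * ((2 * n - 1 + t ^ 2) / (2 * n)) ^ n := by
        apply mul_le_mul_of_nonneg_left hpow (by positivity)
    _ = (2 * n - 1 + t ^ 2) ^ n := by
        rw [div_pow, mul_div_cancel₀]
        positivity

/-- For `λ > 0` and `D ≥ 0`, the function
`g(γ) = 1/(2λ) + γ·λ^(2D+2)/(λ²+γ²)^(D+2)` attains its global maximum at
`γ* = λ/√(2D+3)`. -/
theorem qaoa_p1_exp_global_max (l : ℝ) (hl : 0 < l) (D : ℕ) :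
    IsMaxOn (fun γ : ℝ => 1 / (2 * l) + γ * l ^ (2 * D + 2) / (l ^ 2 + γ ^ 2) ^ (D + 2))
      Set.univ (l / Real.sqrt (2 * D + 3)) := by
  intro γ _
  simp only [Set.mem_setOf_eq]
  set s : ℝ := Real.sqrt (2 * D + 3) with hs
  have hs2 : s ^ 2 = 2 * D + 3 := Real.sq_sqrt (by positivity)
  have hspos : 0 < s := Real.sqrt_pos.mpr (by positivity)
  set a : ℝ := l / s with ha
  have hapos : 0 < a := by positivity
  apply add_le_add_right
  have hden1 : (0:ℝ) < (l ^ 2 + γ ^ 2) ^ (D + 2) := by positivity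
  have hden2 : (0:ℝ) < (l ^ 2 + a ^ 2) ^ (D + 2) := by positivity
  rw [div_le_div_iff₀ hden1 hden2]
  have hmain : γ * (l ^ 2 + a ^ 2) ^ (D + 2) ≤ a * (l ^ 2 + γ ^ 2) ^ (D + 2) := by
    rcases le_or_gt γ 0 with hγ | hγ
    · have h1 : γ * (l ^ 2 + a ^ 2) ^ (D + 2) ≤ 0 :=
        mul_nonpos_of_nonpos_of_nonneg hγ (le_of_lt hden2)
      have h2 : (0:ℝ) ≤ a * (l ^ 2 + γ ^ 2) ^ (D + 2) := by positivity
      linarith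
    · set t : ℝ := γ * s / l with htdef
      have ht : 0 < t := by positivity
      have hγeq : γ = t * l / s := by
        rw [htdef]; field_simp
      have hexp1 : l ^ 2 + a ^ 2 = (l ^ 2 / s ^ 2) * (s ^ 2 + 1) := by
        rw [ha]; field_simp
      have hexp2 : l ^ 2 + γ ^ 2 = (l ^ 2 / s ^ 2) * (s ^ 2 + t ^ 2) := by
        rw [hγeq]; field_simp
      have hkey := key_amgm (D + 2) (by omega) t (le_of_lt ht)
      have hcast1 : (2 * (D + 2) : ℝ) = s ^ 2 + 1 := by
        rw [hs2]; push_cast; ring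
      have hcast2 : (2 * ((D:ℝ) + 2) - 1 + t ^ 2) = s ^ 2 + t ^ 2 := by
        rw [hs2]; ring
      push_cast at hkey
      rw [hcast2, hcast1] at hkey
      -- hkey : (s^2+1)^(D+2) * t ≤ (s^2+t^2)^(D+2)
      calc γ * (l ^ 2 + a ^ 2) ^ (D + 2)
          = (a * (l ^ 2 / s ^ 2) ^ (D + 2)) * ((s ^ 2 + 1) ^ (D + 2) * t) := by
            rw [hexp1, mul_pow, hγeq, ha]; ring
        _ ≤ (a * (l ^ 2 / s ^ 2) ^ (D + 2)) * (s ^ 2 + t ^ 2) ^ (D + 2) := by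
            apply mul_le_mul_of_nonneg_left hkey (by positivity)
        _ = a * (l ^ 2 + γ ^ 2) ^ (D + 2) := by
            rw [hexp2, mul_pow]; ring
  calc γ * l ^ (2 * D + 2) * (l ^ 2 + a ^ 2) ^ (D + 2)
      = (γ * (l ^ 2 + a ^ 2) ^ (D + 2)) * l ^ (2 * D + 2) := by ring
    _ ≤ (a * (l ^ 2 + γ ^ 2) ^ (D + 2)) * l ^ (2 * D + 2) := by
        apply mul_le_mul_of_nonneg_right hmain (by positivity)
    _ = a * l ^ (2 * D + 2) * (l ^ 2 + γ ^ 2) ^ (D + 2) := by ring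
end

section
/- For a real random variable w with finite second moment and any fixed real γ, (E[cos(w·γ/√D)])^D → e^{-γ²E[w²]/2} as the integer D → ∞. -/
/-!
Writing `1 - cos y = (y² / 2) · sinc (y / 2)²` shows that `D · (1 - cos (x / √D))` is bounded by
`x² / 2` and tends to `x² / 2`. With `x = w γ`, dominated convergence (the bound is integrable
because `E[w²] < ∞`) gives `D · (1 - E[cos (w γ / √D)]) → γ² E[w²] / 2`, and
`(1 - a_D / D)^D → e^{-a}` whenever `a_D → a`.
-/

open MeasureTheory Real Filter
open scoped Topology

lemma Real.one_sub_cos_eq_sq_mul_sinc_sq (y : ℝ) : 1 - cos y = y ^ 2 / 2 * sinc (y / 2) ^ 2 := by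
  rcases eq_or_ne y 0 with rfl | hy
  · simp
  · have hy2 : y / 2 ≠ 0 := by positivity
    rw [sinc_of_ne_zero hy2, ← cos_sq_add_sin_sq (y / 2)]
    conv_lhs => rw [show y = 2 * (y / 2) by ring, cos_two_mul, ← cos_sq_add_sin_sq (y / 2)]
    field_simp
    ring

lemma natCast_mul_one_sub_cos_div_sqrt_eq_mul_sinc_sq (x : ℝ) {n : ℕ} (hn : n ≠ 0) :
    n * (1 - cos (x / √n)) = x ^ 2 / 2 * sinc (x / √n / 2) ^ 2 := by
  have hn' : (0 : ℝ) < n := by positivity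
  rw [one_sub_cos_eq_sq_mul_sinc_sq, div_pow, sq_sqrt hn'.le]
  field_simp

lemma tendsto_natCast_mul_one_sub_cos_div_sqrt (x : ℝ) :
    Tendsto (fun n : ℕ => n * (1 - cos (x / √n))) atTop (𝓝 (x ^ 2 / 2)) := by
  have hsmall : Tendsto (fun n : ℕ => x / √n / 2) atTop (𝓝 0) := by
    simpa using (tendsto_const_nhds.div_atTop
      (tendsto_sqrt_atTop.comp tendsto_natCast_atTop_atTop)).div_const 2
  have hsinc := ((continuous_sinc.tendsto 0).comp hsmall).pow 2 |>.const_mul (x ^ 2 / 2)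
  rw [sinc_zero, one_pow, mul_one] at hsinc
  refine hsinc.congr' ?_
  filter_upwards [eventually_ne_atTop 0] with n hn
  exact (natCast_mul_one_sub_cos_div_sqrt_eq_mul_sinc_sq x hn).symm

lemma natCast_mul_one_sub_cos_div_sqrt_le (x : ℝ) (n : ℕ) :
    n * (1 - cos (x / √n)) ≤ x ^ 2 / 2 := by
  rcases eq_or_ne n 0 with rfl | hn
  · simp only [CharP.cast_eq_zero, zero_mul]
    positivity
  · rw [natCast_mul_one_sub_cos_div_sqrt_eq_mul_sinc_sq x hn]
    exact mul_le_of_le_one_right (by positivity)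
      ((sq_le_one_iff_abs_le_one _).2 (abs_sinc_le_one _))

lemma tendsto_pow_exp_of_tendsto_natCast_mul_one_sub {c : ℕ → ℝ} {a : ℝ}
    (h : Tendsto (fun n : ℕ => n * (1 - c n)) atTop (𝓝 a)) :
    Tendsto (fun n => c n ^ n) atTop (𝓝 (exp (-a))) := by
  simpa using tendsto_one_add_pow_exp_of_tendsto (g := fun n => c n - 1)
    (by simpa only [← mul_neg, neg_sub] using h.neg)

section Integral

variable {Ω : Type*} [MeasurableSpace Ω] {μ : Measure Ω} [IsProbabilityMeasure μ] {X : Ω → ℝ}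

lemma tendsto_natCast_mul_one_sub_integral_cos_div_sqrt (hX : AEStronglyMeasurable X μ)
    (hX2 : Integrable (fun ω => X ω ^ 2) μ) :
    Tendsto (fun n : ℕ => n * (1 - ∫ ω, cos (X ω / √n) ∂μ)) atTop
      (𝓝 ((∫ ω, X ω ^ 2 ∂μ) / 2)) := by
  have hcos (n : ℕ) : Integrable (fun ω => cos (X ω / √n)) μ :=
    .of_bound (continuous_cos.comp_aestronglyMeasurable (hX.mul_const (√n)⁻¹)) 1
      (.of_forall fun ω => abs_cos_le_one _)
  have hdom := tendsto_integral_of_dominated_convergence (μ := μ)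
    (F := fun (n : ℕ) ω => n * (1 - cos (X ω / √n))) (fun ω => X ω ^ 2 / 2)
    (fun n => ((integrable_const 1).sub (hcos n)).const_mul _ |>.aestronglyMeasurable)
    (hX2.div_const 2)
    (fun n => .of_forall fun ω => by
      rw [norm_of_nonneg (mul_nonneg n.cast_nonneg (sub_nonneg.2 (cos_le_one _)))]
      exact natCast_mul_one_sub_cos_div_sqrt_le _ n)
    (.of_forall fun ω => tendsto_natCast_mul_one_sub_cos_div_sqrt (X ω))
  simpa only [integral_const_mul, integral_sub (integrable_const 1) (hcos _), integral_const,
    probReal_univ, smul_eq_mul, mul_one, integral_div] using hdom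

lemma tendsto_integral_cos_div_sqrt_pow (hX : AEStronglyMeasurable X μ)
    (hX2 : Integrable (fun ω => X ω ^ 2) μ) :
    Tendsto (fun n : ℕ => (∫ ω, cos (X ω / √n) ∂μ) ^ n) atTop
      (𝓝 (exp (-(∫ ω, X ω ^ 2 ∂μ) / 2))) := by
  rw [neg_div]
  exact tendsto_pow_exp_of_tendsto_natCast_mul_one_sub
    (tendsto_natCast_mul_one_sub_integral_cos_div_sqrt hX hX2)

end Integral

/-- For a real random variable `w` with finite second moment and fixed `γ`,
`(E[cos(w·γ/√D)])^D → e^(-γ²·E[w²]/2)` as the integer `D → ∞`. -/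
theorem expectation_cos_pow_tendsto {Ω : Type*} [MeasureSpace Ω]
    [IsProbabilityMeasure (volume : Measure Ω)] (w : Ω → ℝ) (hm : Measurable w)
    (h2 : Integrable (fun ω => (w ω) ^ 2)) (γ : ℝ) :
    Tendsto (fun D : ℕ => (∫ ω, Real.cos (w ω * (γ / Real.sqrt D))) ^ D)
      atTop (nhds (Real.exp (-γ ^ 2 * (∫ ω, (w ω) ^ 2) / 2))) := by
  have hX2 : Integrable (fun ω => (w ω * γ) ^ 2) := by
    simpa only [mul_pow] using h2.mul_const (γ ^ 2)
  have := tendsto_integral_cos_div_sqrt_pow (hm.mul_const γ).aestronglyMeasurable hX2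
  simp_rw [mul_div_assoc, mul_pow, integral_mul_const] at this
  convert this using 3
  ring
end

section
/- Let X₁,…,Xₙ be independent random variables and f satisfy the bounded differences property with constants c₁,…,cₙ (changing the i-th coordinate changes f by at most cᵢ). Then Pr[|f(X) − E f(X)| ≥ ε] ≤ 2·exp(−2ε²/∑ᵢcᵢ²). -/
/-!
The centred function `f(X) − E f(X)` is sub-Gaussian with variance proxy `∑ cᵢ² / 4`, and the
two-sided Chernoff bound for such a variable is exactly the claimed tail bound. Sub-Gaussianity
follows by induction on `n`, splitting off the first coordinate `X₀`: with `F` the average of `f`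
over `X₀`, write `f − E f = (f − F) + (F − E F)`. For fixed remaining coordinates the first summand
has mean zero and oscillation at most `c₀`, so Hoeffding's lemma applies; `F` again has bounded
differences, so the induction hypothesis covers the second summand; and by Fubini the two
variance proxies add.
-/

open MeasureTheory ProbabilityTheory Real
open scoped NNReal

lemma exists_forall_mem_Icc_of_abs_sub_le {α : Type*} [Nonempty α] {g : α → ℝ} {c : ℝ}
    (hg : ∀ x y, |g x - g y| ≤ c) : ∃ a, ∀ x, g x ∈ Set.Icc a (a + c) := by
  obtain ⟨x₀⟩ := ‹Nonempty α›
  have hbdd : BddBelow (Set.range g) :=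
    ⟨g x₀ - c, by rintro _ ⟨y, rfl⟩; linarith [(abs_le.mp (hg x₀ y)).2]⟩
  refine ⟨⨅ y, g y, fun x => ⟨ciInf_le hbdd x, ?_⟩⟩
  have : g x - c ≤ ⨅ y, g y := le_ciInf fun y => by linarith [(abs_le.mp (hg x y)).2]
  linarith

section Oscillation

variable {Ω : Type*} [MeasurableSpace Ω] {μ : Measure Ω} {g : Ω → ℝ} {c : ℝ}

lemma integrable_of_abs_sub_le [IsFiniteMeasure μ] [Nonempty Ω] (hm : AEMeasurable g μ)
    (hg : ∀ x y, |g x - g y| ≤ c) : Integrable g μ := by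
  obtain ⟨a, ha⟩ := exists_forall_mem_Icc_of_abs_sub_le hg
  exact Integrable.of_mem_Icc a (a + c) hm (ae_of_all _ ha)

lemma hasSubgaussianMGF_sub_integral_of_abs_sub_le [IsProbabilityMeasure μ]
    (hm : AEMeasurable g μ) (hg : ∀ x y, |g x - g y| ≤ c) :
    HasSubgaussianMGF (fun x => g x - ∫ y, g y ∂μ) ((‖c‖₊ / 2) ^ 2) μ := by
  have := nonempty_of_isProbabilityMeasure μ
  obtain ⟨a, ha⟩ := exists_forall_mem_Icc_of_abs_sub_le hg
  simpa using hasSubgaussianMGF_of_mem_Icc hm (ae_of_all _ ha)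

lemma abs_integral_sub_integral_le [IsProbabilityMeasure μ] {g₁ g₂ : Ω → ℝ}
    (h₁ : Integrable g₁ μ) (h₂ : Integrable g₂ μ) (h : ∀ x, |g₁ x - g₂ x| ≤ c) :
    |∫ x, g₁ x ∂μ - ∫ x, g₂ x ∂μ| ≤ c := by
  rw [← integral_sub h₁ h₂]
  simpa using norm_integral_le_of_norm_le_const
    (ae_of_all μ fun x => (norm_eq_abs _).trans_le (h x))

end Oscillation

section Product

variable {α β : Type*} [MeasurableSpace α] [MeasurableSpace β] {μ : Measure α} {ν : Measure β}
  [SFinite μ] [SFinite ν] {g : α → β → ℝ} {h : β → ℝ} {cg ch : ℝ≥0}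

lemma ProbabilityTheory.HasSubgaussianMGF.prod_add
    (hm : AEStronglyMeasurable (Function.uncurry g) (μ.prod ν))
    (hg : ∀ b, HasSubgaussianMGF (fun a => g a b) cg μ) (hh : HasSubgaussianMGF h ch ν) :
    HasSubgaussianMGF (fun p : α × β => g p.1 p.2 + h p.2) (cg + ch) (μ.prod ν) := by
  have hsplit : ∀ t a b, exp (t * (g a b + h b)) = exp (t * g a b) * exp (t * h b) :=
    fun t a b => by rw [mul_add, exp_add]
  have hint : ∀ t, Integrable (fun p : α × β => exp (t * (g p.1 p.2 + h p.2))) (μ.prod ν) := by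
    intro t
    have hmeas : AEStronglyMeasurable (fun p : α × β => exp (t * (g p.1 p.2 + h p.2)))
        (μ.prod ν) :=
      continuous_exp.comp_aestronglyMeasurable
        ((hm.add hh.aestronglyMeasurable.comp_snd).const_mul t)
    refine (integrable_prod_iff' hmeas).2 ⟨ae_of_all _ fun b => ?_, ?_⟩
    · simpa only [hsplit] using ((hg b).integrable_exp_mul t).mul_const _
    · refine ((hh.integrable_exp_mul t).mul_const (exp (cg * t ^ 2 / 2))).mono'
        hmeas.norm.prod_swap.integral_prod_right' (ae_of_all _ fun b => ?_)
      rw [norm_of_nonneg (integral_nonneg fun _ => norm_nonneg _)]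
      simp only [norm_eq_abs, hsplit, abs_mul, abs_exp, integral_mul_const]
      rw [mul_comm]
      exact mul_le_mul_of_nonneg_left ((hg b).mgf_le t) (exp_pos _).le
  refine ⟨hint, fun t => ?_⟩
  calc mgf (fun p : α × β => g p.1 p.2 + h p.2) (μ.prod ν) t
      = ∫ b, mgf (fun a => g a b) μ t * exp (t * h b) ∂ν := by
        rw [mgf, integral_prod_symm _ (hint t)]
        simp only [hsplit, integral_mul_const, mgf]
    _ ≤ ∫ b, exp (cg * t ^ 2 / 2) * exp (t * h b) ∂ν := by
        refine integral_mono_of_nonneg (ae_of_all _ fun b => ?_)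
          ((hh.integrable_exp_mul t).const_mul _) (ae_of_all _ fun b => ?_)
        · exact mul_nonneg (integral_nonneg fun _ => (exp_pos _).le) (exp_pos _).le
        · exact mul_le_mul_of_nonneg_right ((hg b).mgf_le t) (exp_pos _).le
    _ ≤ exp ((cg + ch : ℝ≥0) * t ^ 2 / 2) := by
        rw [integral_const_mul, NNReal.coe_add, add_mul, add_div, exp_add]
        exact mul_le_mul_of_nonneg_left (hh.mgf_le t) (exp_pos _).le

end Product

lemma ProbabilityTheory.HasSubgaussianMGF.measureReal_abs_ge_le {Ω : Type*}
    [MeasurableSpace Ω] {μ : Measure Ω} [IsFiniteMeasure μ] {X : Ω → ℝ} {c : ℝ≥0}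
    (h : HasSubgaussianMGF X c μ) {ε : ℝ} (hε : 0 ≤ ε) :
    μ.real {ω | ε ≤ |X ω|} ≤ 2 * exp (-ε ^ 2 / (2 * c)) := by
  have hsub : {ω | ε ≤ |X ω|} ⊆ {ω | ε ≤ X ω} ∪ {ω | ε ≤ (-X) ω} :=
    fun ω (hω : ε ≤ |X ω|) => le_abs.mp hω
  calc μ.real {ω | ε ≤ |X ω|} ≤ μ.real {ω | ε ≤ X ω} + μ.real {ω | ε ≤ (-X) ω} :=
        (measureReal_mono hsub).trans (measureReal_union_le _ _)
    _ ≤ 2 * exp (-ε ^ 2 / (2 * c)) := by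
        linarith [h.measure_ge_le hε, h.neg.measure_ge_le hε]

def BoundedDifferences {ι X : Type*} (f : (ι → X) → ℝ) (c : ι → ℝ) : Prop :=
  ∀ i (x x' : ι → X), (∀ j, j ≠ i → x j = x' j) → |f x - f x'| ≤ c i

namespace BoundedDifferences

variable {X : Type*}

lemma abs_sub_insertNth_le {n : ℕ} {f : (Fin (n + 1) → X) → ℝ} {c : Fin (n + 1) → ℝ}
    (hf : BoundedDifferences f c) (i : Fin (n + 1)) (y : Fin n → X) (a b : X) :
    |f (i.insertNth a y) - f (i.insertNth b y)| ≤ c i := by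
  refine hf i _ _ fun j hj => ?_
  obtain ⟨k, rfl⟩ := Fin.exists_succAbove_eq hj
  simp only [Fin.insertNth_apply_succAbove]

lemma comp_insertNth {n : ℕ} {f : (Fin (n + 1) → X) → ℝ} {c : Fin (n + 1) → ℝ}
    (hf : BoundedDifferences f c) (i : Fin (n + 1)) (a : X) :
    BoundedDifferences (fun y => f (i.insertNth a y)) (fun j => c (i.succAbove j)) := by
  refine fun j y y' hy => hf _ _ _ fun k hk => ?_
  rcases Fin.eq_self_or_eq_succAbove i k with rfl | ⟨l, rfl⟩
  · simp only [Fin.insertNth_apply_same]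
  · simp only [Fin.insertNth_apply_succAbove]
    exact hy l fun hl => hk (hl ▸ rfl)

lemma integral {ι α : Type*} [MeasurableSpace α] {μ : Measure α} [IsProbabilityMeasure μ]
    {g : α → (ι → X) → ℝ} {c : ι → ℝ} (hg : ∀ a, BoundedDifferences (g a) c)
    (hint : ∀ y, Integrable (fun a => g a y) μ) :
    BoundedDifferences (fun y => ∫ a, g a y ∂μ) c := by
  intro i y y' hy
  exact abs_integral_sub_integral_le (hint y) (hint y') fun a => hg a i y y' hy

end BoundedDifferences

lemma hasSubgaussianMGF_prod_sub_integral {α β : Type*} [MeasurableSpace α] [MeasurableSpace β]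
    {μ : Measure α} {ν : Measure β} [IsProbabilityMeasure μ] [IsFiniteMeasure ν]
    {g : α × β → ℝ} {c : ℝ} {C : ℝ≥0} (hg : Measurable g)
    (hosc : ∀ b a a', |g (a, b) - g (a', b)| ≤ c)
    (hF : HasSubgaussianMGF (fun b => ∫ a, g (a, b) ∂μ - ∫ b', ∫ a, g (a, b') ∂μ ∂ν) C ν) :
    HasSubgaussianMGF (fun p => g p - ∫ q, g q ∂μ.prod ν) ((‖c‖₊ / 2) ^ 2 + C) (μ.prod ν) := by
  set F : β → ℝ := fun b => ∫ a, g (a, b) ∂μ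
  have hF_meas : Measurable F := hg.stronglyMeasurable.integral_prod_left'.measurable
  have hsplit := HasSubgaussianMGF.prod_add (g := fun a b => g (a, b) - F b)
    (hg.sub (hF_meas.comp measurable_snd)).aestronglyMeasurable
    (fun b => hasSubgaussianMGF_sub_integral_of_abs_sub_le
      (hg.comp measurable_prodMk_right).aemeasurable (fun a a' => hosc b a a')) hF
  have hsum : (fun p : α × β => g (p.1, p.2) - F p.2 + (F p.2 - ∫ b, F b ∂ν)) =
      fun p => g p - ∫ b, F b ∂ν := by
    funext p
    exact sub_add_sub_cancel _ _ _
  rw [hsum] at hsplit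
  have hg_int : Integrable g (μ.prod ν) := by
    refine (hsplit.integrable.add (integrable_const (∫ b, F b ∂ν))).congr
      (ae_of_all _ fun p => ?_)
    simp
  rwa [integral_prod_symm g hg_int]

theorem BoundedDifferences.hasSubgaussianMGF {X : Type*} [MeasurableSpace X] {n : ℕ}
    (μ : Fin n → Measure X) [∀ i, IsProbabilityMeasure (μ i)] {f : (Fin n → X) → ℝ}
    {c : Fin n → ℝ} (hf : Measurable f) (hbd : BoundedDifferences f c) :
    HasSubgaussianMGF (fun x => f x - ∫ y, f y ∂Measure.pi μ) (∑ i, (‖c i‖₊ / 2) ^ 2)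
      (Measure.pi μ) := by
  induction n with
  | zero =>
    have hzero : (fun x => f x - ∫ y, f y ∂Measure.pi μ) = fun _ => 0 := by
      funext x
      rw [show f = fun _ => f x from funext fun y => congrArg f (Subsingleton.elim y x)]
      simp
    simp [hzero]
  | succ n ih =>
    have := nonempty_of_isProbabilityMeasure (μ 0)
    let e := MeasurableEquiv.piFinSuccAbove (fun _ : Fin (n + 1) => X) 0
    have he : MeasurePreserving e (Measure.pi μ)
        ((μ 0).prod (Measure.pi fun j => μ (Fin.succAbove 0 j))) :=
      measurePreserving_piFinSuccAbove μ 0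
    have hfe : Measurable (f ∘ e.symm) := hf.comp e.symm.measurable
    have hstep := hasSubgaussianMGF_prod_sub_integral hfe
      (fun y a b => hbd.abs_sub_insertNth_le 0 y a b)
      (ih (fun j => μ (Fin.succAbove 0 j))
        (hfe.stronglyMeasurable.integral_prod_left' (μ := μ 0)).measurable
        (BoundedDifferences.integral (fun a => hbd.comp_insertNth 0 a) fun y =>
          integrable_of_abs_sub_le (hfe.comp measurable_prodMk_right).aemeasurable
            (hbd.abs_sub_insertNth_le 0 y)))
    rw [← he.map_eq] at hstep
    convert hstep.of_map e.measurable.aemeasurable using 1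
    · funext x
      simp [integral_map_equiv]
    · rw [Fin.sum_univ_succAbove _ 0]

/-- McDiarmid's inequality: if `f` has the bounded differences property with
constants `c i` and the coordinates `X i` are independent, then
`Pr[|f(X) − E f(X)| ≥ ε] ≤ 2·exp(−2ε²/∑ cᵢ²)`. -/
theorem mcdiarmid_inequality {X : Type*} [MeasurableSpace X] (n : ℕ)
    (μ : Fin n → Measure X) [∀ i, IsProbabilityMeasure (μ i)]
    (f : (Fin n → X) → ℝ) (hf : Measurable f) (c : Fin n → ℝ)
    (hbd : ∀ (i : Fin n) (x x' : Fin n → X),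
      (∀ j, j ≠ i → x j = x' j) → |f x - f x'| ≤ c i)
    (ε : ℝ) (hε : 0 < ε) :
    (Measure.pi μ) {x | ε ≤ |f x - ∫ y, f y ∂(Measure.pi μ)|} ≤
      ENNReal.ofReal (2 * Real.exp (-2 * ε ^ 2 / ∑ i, (c i) ^ 2)) := by
  have hsubG := BoundedDifferences.hasSubgaussianMGF μ hf hbd
  have hproxy : ((∑ i, (‖c i‖₊ / 2) ^ 2 : ℝ≥0) : ℝ) = (∑ i, c i ^ 2) / 4 := by
    push_cast
    simp only [norm_eq_abs, div_pow, sq_abs, Finset.sum_div]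
    norm_num
  rw [← ofReal_measureReal]
  refine ENNReal.ofReal_le_ofReal ((hsubG.measureReal_abs_ge_le hε.le).trans_eq ?_)
  rw [hproxy]
  congr 2
  ring
end

section
/- For any real random variable w that is integrable, μ ≠ 0 its mean, and any fixed β, the p=1 expected QAOA energy on a triangle-free (D+1)-regular graph on N vertices with i.i.d. weights satisfies E[⟨C(γ)⟩] = (N(D+1)/2)·(μ/2 + (1/2)·E[w·sin(wγ)]·(E[cos(wγ)])^D), where ⟨C(γ)⟩ is given by the closed-form p=1 expression with β = π/8. -/
/-!
Read the weights as the coordinates of the product measure `ν^E`. After identifying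
`w_{uv}` with the coordinate of the edge `uv`, every term of `⟨C(γ)⟩` is `f(w_e) · ∏ g(w_i)`,
where `i` runs over the `D` other edges at one endpoint of `e`; these are pairwise distinct
edges, hence independent coordinates, so the term has expectation `E[f] · E[g]^D`.
Summing over the `N(D+1)/2` edges (handshake lemma) gives the formula.
-/

open Finset MeasureTheory Real

variable {n : ℕ}

/-- The index set of edges of `G`, as ordered pairs with increasing endpoints. -/
def EdgeIdx (G : SimpleGraph (Fin n)) [DecidableRel G.Adj] : Type :=
  {p : Fin n × Fin n // p.1 < p.2 ∧ G.Adj p.1 p.2}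

instance (G : SimpleGraph (Fin n)) [DecidableRel G.Adj] : Fintype (EdgeIdx G) :=
  Subtype.fintype _

/-- The weight of the (ordered) pair `(u, v)` determined by an assignment `W` of
weights to the edges of `G`. -/
noncomputable def wOf (G : SimpleGraph (Fin n)) [DecidableRel G.Adj]
    (W : EdgeIdx G → ℝ) (u v : Fin n) : ℝ :=
  if h : u < v ∧ G.Adj u v then W ⟨(u, v), h⟩
  else if h : v < u ∧ G.Adj v u then W ⟨(v, u), h⟩
  else 0

/-- The closed-form `p = 1` QAOA energy `⟨C(γ)⟩` (at `β = π/8`) for weighted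
MaxCut on a triangle-free graph, as a function of the edge weights `W`. -/
noncomputable def qaoaEnergy (G : SimpleGraph (Fin n)) [DecidableRel G.Adj]
    (γ : ℝ) (W : EdgeIdx G → ℝ) : ℝ :=
  (∑ e : EdgeIdx G, wOf G W e.1.1 e.1.2 / 2) +
  (1 / 4) * ∑ e : EdgeIdx G,
      wOf G W e.1.1 e.1.2 * Real.sin (wOf G W e.1.1 e.1.2 * γ) *
        ((∏ k ∈ (G.neighborFinset e.1.1).erase e.1.2, Real.cos (wOf G W e.1.1 k * γ)) +
         (∏ t ∈ (G.neighborFinset e.1.2).erase e.1.1, Real.cos (wOf G W t e.1.2 * γ)))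

open ProbabilityTheory

section IndependentCoordinates

variable {ι E 𝕜 : Type*} [Fintype ι] [MeasurableSpace E] [RCLike 𝕜]
  {ν : Measure E} [IsProbabilityMeasure ν]

theorem integral_pi_prod_comp_of_injective {κ : Type*} [Fintype κ] {σ : κ → ι} (hσ : σ.Injective)
    {f : κ → E → 𝕜} (hf : ∀ k, AEStronglyMeasurable (f k) ν) :
    ∫ W, ∏ k, f k (W (σ k)) ∂Measure.pi (fun _ : ι => ν) = ∏ k, ∫ x, f k x ∂ν := by
  have hind : iIndepFun (fun k (W : ι → E) => W (σ k)) (Measure.pi fun _ => ν) :=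
    (iIndepFun_pi (X := fun _ => id) fun _ => aemeasurable_id).precomp hσ
  rw [hind.integral_fun_prod_comp (fun k => (measurable_pi_apply _).aemeasurable)]
  · exact Finset.prod_congr rfl fun k _ => integral_comp_eval (hf k)
  · intro k
    rw [(measurePreserving_eval _ (σ k)).map_eq]
    exact hf k

theorem integral_pi_mul_prod_comp {κ : Type*} [Fintype κ] (e : ι) {σ : κ → ι}
    (hσ : σ.Injective) (he : ∀ k, σ k ≠ e) {f g : E → 𝕜}
    (hf : AEStronglyMeasurable f ν) (hg : AEStronglyMeasurable g ν) :
    ∫ W, f (W e) * ∏ k, g (W (σ k)) ∂Measure.pi (fun _ : ι => ν) =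
      (∫ x, f x ∂ν) * (∫ x, g x ∂ν) ^ Fintype.card κ := by
  have hσ' : (fun o : Option κ => o.elim e σ).Injective := by
    rintro (_ | a) (_ | b) h
    exacts [rfl, (he b h.symm).elim, (he a h).elim, congrArg some (hσ h)]
  simpa [Fintype.prod_option] using integral_pi_prod_comp_of_injective hσ'
    (f := fun o => o.elim f fun _ => g) (by rintro (_ | k) <;> assumption)

theorem integrable_pi_mul_prod_comp {κ : Type*} [Fintype κ] (e : ι) (σ : κ → ι)
    {f g : E → 𝕜} (hf : Integrable f ν) (hg : AEStronglyMeasurable g ν)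
    (hg_le : ∀ x, ‖g x‖ ≤ 1) :
    Integrable (fun W => f (W e) * ∏ k, g (W (σ k))) (Measure.pi fun _ : ι => ν) := by
  refine (integrable_comp_eval hf).mul_bdd (c := 1) ?_ (ae_of_all _ fun W => ?_)
  · exact Finset.aestronglyMeasurable_fun_prod _ fun k _ =>
      hg.comp_quasiMeasurePreserving (Measure.quasiMeasurePreserving_eval _ (σ k))
  · rw [norm_prod]
    exact Finset.prod_le_one (fun _ _ => norm_nonneg _) fun k _ => hg_le _

end IndependentCoordinates

namespace EdgeIdx

variable {G : SimpleGraph (Fin n)} [DecidableRel G.Adj] {u v : Fin n}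

lemma ext {e f : EdgeIdx G} (h : e.1 = f.1) : e = f :=
  Subtype.ext h

def ofAdj (h : G.Adj u v) : EdgeIdx G :=
  ⟨if u < v then (u, v) else (v, u), by
    split_ifs with huv
    exacts [⟨huv, h⟩, ⟨lt_of_le_of_ne (not_lt.1 huv) h.ne', h.symm⟩]⟩

lemma ofAdj_val (h : G.Adj u v) : (ofAdj h).1 = if u < v then (u, v) else (v, u) :=
  rfl

lemma ofAdj_symm (h : G.Adj u v) : ofAdj h.symm = ofAdj h := by
  refine ext ?_
  rw [ofAdj_val, ofAdj_val]
  rcases h.ne.lt_or_gt with huv | hvu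
  · rw [if_neg huv.not_gt, if_pos huv]
  · rw [if_pos hvu, if_neg hvu.not_gt]

lemma ofAdj_self (e : EdgeIdx G) : ofAdj e.2.2 = e :=
  ext (by rw [ofAdj_val, if_pos e.2.1])

lemma ofAdj_injective {a b : Fin n} (ha : G.Adj u a) (hb : G.Adj u b)
    (h : ofAdj ha = ofAdj hb) : a = b := by
  have h' := congrArg Subtype.val h
  rw [ofAdj_val, ofAdj_val] at h'
  split_ifs at h' <;> simp only [Prod.mk.injEq] at h' <;> grind

def ofNeighbor (u v : Fin n) (k : (G.neighborFinset u).erase v) : EdgeIdx G :=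
  ofAdj ((G.mem_neighborFinset u k).1 (Finset.mem_of_mem_erase k.2))

lemma ofNeighbor_injective (u v : Fin n) : (ofNeighbor (G := G) u v).Injective :=
  fun _ _ h => Subtype.ext (ofAdj_injective _ _ h)

lemma ofNeighbor_ne_ofAdj (h : G.Adj u v) (k : (G.neighborFinset u).erase v) :
    ofNeighbor u v k ≠ ofAdj h :=
  fun hk => Finset.ne_of_mem_erase k.2 (ofAdj_injective _ _ hk)

lemma card_eq_card_edgeFinset : Fintype.card (EdgeIdx G) = #G.edgeFinset := by
  rw [← Fintype.card_coe G.edgeFinset]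
  refine Fintype.card_congr (Equiv.ofBijective
    (fun e => ⟨s(e.1.1, e.1.2), G.mem_edgeFinset.2 e.2.2⟩) ⟨?_, ?_⟩)
  · intro e f h
    rcases Sym2.eq_iff.1 (congrArg Subtype.val h) with ⟨h₁, h₂⟩ | ⟨h₁, h₂⟩
    · exact ext (Prod.ext h₁ h₂)
    · exact absurd (h₁ ▸ h₂ ▸ e.2.1) f.2.1.asymm
  · rintro ⟨s, hs⟩
    induction s using Sym2.ind with
    | _ u v =>
      have h : G.Adj u v := G.mem_edgeFinset.1 hs
      refine ⟨ofAdj h, Subtype.ext ?_⟩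
      show s((ofAdj h).1.1, (ofAdj h).1.2) = s(u, v)
      rw [ofAdj_val]
      split_ifs
      exacts [rfl, Sym2.eq_swap]

lemma two_mul_card {D : ℕ} (hreg : ∀ v, G.degree v = D + 1) :
    2 * Fintype.card (EdgeIdx G) = n * (D + 1) := by
  rw [card_eq_card_edgeFinset, ← G.sum_degrees_eq_twice_card_edges]
  simp [hreg]

end EdgeIdx

lemma card_erase_neighborFinset {G : SimpleGraph (Fin n)} [DecidableRel G.Adj] {u v : Fin n}
    {D : ℕ} (hu : G.degree u = D + 1) (h : G.Adj u v) :
    Fintype.card ((G.neighborFinset u).erase v) = D := by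
  rw [Fintype.card_coe, Finset.card_erase_of_mem ((G.mem_neighborFinset u v).2 h),
    G.card_neighborFinset_eq_degree, hu, Nat.add_sub_cancel]

section Energy

variable {G : SimpleGraph (Fin n)} [DecidableRel G.Adj]

open EdgeIdx

lemma wOf_eq_ofAdj (W : EdgeIdx G → ℝ) {u v : Fin n} (h : G.Adj u v) :
    wOf G W u v = W (ofAdj h) := by
  unfold wOf
  rcases h.ne.lt_or_gt with huv | hvu
  · rw [dif_pos ⟨huv, h⟩]
    exact congrArg W (ext (by rw [ofAdj_val, if_pos huv]))
  · rw [dif_neg fun h' => hvu.not_gt h'.1, dif_pos ⟨hvu, h.symm⟩]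
    exact congrArg W (ext (by rw [ofAdj_val, if_neg hvu.not_gt]))

lemma wOf_comm_of_adj (W : EdgeIdx G → ℝ) {u v : Fin n} (h : G.Adj u v) :
    wOf G W u v = wOf G W v u := by
  rw [wOf_eq_ofAdj W h, wOf_eq_ofAdj W h.symm, ofAdj_symm]

lemma prod_erase_neighborFinset_wOf (W : EdgeIdx G → ℝ) (φ : ℝ → ℝ) (u v : Fin n) :
    ∏ k ∈ (G.neighborFinset u).erase v, φ (wOf G W u k) =
      ∏ k, φ (W (ofNeighbor u v k)) := by
  rw [← Finset.prod_coe_sort]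
  exact Finset.prod_congr rfl fun k _ => by rw [wOf_eq_ofAdj]; rfl

noncomputable def edgeEnergy (γ : ℝ) (e : EdgeIdx G) (W : EdgeIdx G → ℝ) : ℝ :=
  W e / 2 + 1 / 4 * (W e * sin (W e * γ) * ∏ k, cos (W (ofNeighbor e.1.1 e.1.2 k) * γ))
    + 1 / 4 * (W e * sin (W e * γ) * ∏ k, cos (W (ofNeighbor e.1.2 e.1.1 k) * γ))

lemma qaoaEnergy_eq_sum_edgeEnergy (γ : ℝ) (W : EdgeIdx G → ℝ) :
    qaoaEnergy G γ W = ∑ e, edgeEnergy γ e W := by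
  unfold qaoaEnergy edgeEnergy
  rw [Finset.mul_sum, ← Finset.sum_add_distrib]
  refine Finset.sum_congr rfl fun e _ => ?_
  have hwe : wOf G W e.1.1 e.1.2 = W e := by rw [wOf_eq_ofAdj W e.2.2, ofAdj_self]
  have hcomm : ∏ t ∈ (G.neighborFinset e.1.2).erase e.1.1, cos (wOf G W t e.1.2 * γ) =
      ∏ t ∈ (G.neighborFinset e.1.2).erase e.1.1, cos (wOf G W e.1.2 t * γ) :=
    Finset.prod_congr rfl fun t ht => by
      rw [wOf_comm_of_adj W ((G.mem_neighborFinset _ t).1 (Finset.mem_of_mem_erase ht)).symm]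
  rw [hwe, hcomm, prod_erase_neighborFinset_wOf W (fun x => cos (x * γ)),
    prod_erase_neighborFinset_wOf W (fun x => cos (x * γ))]
  ring

variable {ν : Measure ℝ} {γ : ℝ} {D : ℕ}

lemma integrable_mul_sin_mul (hint : Integrable (fun x : ℝ => x) ν) :
    Integrable (fun x => x * sin (x * γ)) ν :=
  hint.mul_bdd (c := 1) (by fun_prop) (ae_of_all _ fun x => by
    simpa only [Real.norm_eq_abs] using abs_sin_le_one (x * γ))

variable [IsProbabilityMeasure ν]

lemma integral_mul_prod_ofNeighbor {u v : Fin n} (hu : G.degree u = D + 1)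
    (h : G.Adj u v) {e : EdgeIdx G} (he : ofAdj h = e) :
    ∫ W, W e * sin (W e * γ) * ∏ k, cos (W (ofNeighbor u v k) * γ) ∂(Measure.pi fun _ => ν) =
      (∫ x, x * sin (x * γ) ∂ν) * (∫ x, cos (x * γ) ∂ν) ^ D := by
  subst he
  rw [← card_erase_neighborFinset hu h]
  exact integral_pi_mul_prod_comp _ (ofNeighbor_injective u v) (ofNeighbor_ne_ofAdj h)
    (f := fun x => x * sin (x * γ)) (g := fun x => cos (x * γ)) (by fun_prop) (by fun_prop)

lemma integrable_mul_prod_ofNeighbor (hint : Integrable (fun x : ℝ => x) ν) (e : EdgeIdx G)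
    (u v : Fin n) :
    Integrable (fun W => W e * sin (W e * γ) * ∏ k, cos (W (ofNeighbor u v k) * γ))
      (Measure.pi fun _ => ν) :=
  integrable_pi_mul_prod_comp e (ofNeighbor u v) (integrable_mul_sin_mul hint)
    (g := fun x => cos (x * γ)) (by fun_prop) fun x => by
      simpa only [Real.norm_eq_abs] using abs_cos_le_one (x * γ)

lemma integrable_edgeEnergy (hint : Integrable (fun x : ℝ => x) ν) (e : EdgeIdx G) :
    Integrable (edgeEnergy γ e) (Measure.pi fun _ => ν) :=
  (((integrable_comp_eval (f := fun x => x) hint).div_const 2).fun_add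
    ((integrable_mul_prod_ofNeighbor hint e _ _).const_mul _)).fun_add
    ((integrable_mul_prod_ofNeighbor hint e _ _).const_mul _)

lemma integral_edgeEnergy (hint : Integrable (fun x : ℝ => x) ν)
    (hreg : ∀ v, G.degree v = D + 1) (e : EdgeIdx G) :
    ∫ W, edgeEnergy γ e W ∂(Measure.pi fun _ => ν) =
      (∫ x, x ∂ν) / 2 +
        1 / 2 * (∫ x, x * sin (x * γ) ∂ν) * (∫ x, cos (x * γ) ∂ν) ^ D := by
  have hmean : Integrable (fun W : EdgeIdx G → ℝ => W e / 2) (Measure.pi fun _ => ν) :=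
    (integrable_comp_eval (f := fun x => x) hint).div_const 2
  have h₁ := (integrable_mul_prod_ofNeighbor hint e e.1.1 e.1.2 (γ := γ)).const_mul (1 / 4)
  have h₂ := (integrable_mul_prod_ofNeighbor hint e e.1.2 e.1.1 (γ := γ)).const_mul (1 / 4)
  unfold edgeEnergy
  rw [integral_add (hmean.fun_add h₁) h₂, integral_add hmean h₁,
    integral_const_mul, integral_const_mul, integral_div,
    integral_eval,
    integral_mul_prod_ofNeighbor (hreg _) e.2.2 (ofAdj_self e),
    integral_mul_prod_ofNeighbor (hreg _) e.2.2.symm ((ofAdj_symm _).trans (ofAdj_self e))]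
  ring

end Energy

theorem expected_qaoa_energy_regular_general (G : SimpleGraph (Fin n)) [DecidableRel G.Adj]
    (D : ℕ) (hreg : ∀ v, G.degree v = D + 1)
    (ν : Measure ℝ) [IsProbabilityMeasure ν]
    (hint : Integrable (fun x : ℝ => x) ν) (γ : ℝ) :
    ∫ W, qaoaEnergy G γ W ∂(Measure.pi fun _ : EdgeIdx G => ν) =
      ((n : ℝ) * (D + 1) / 2) *
        ((∫ x, x ∂ν) / 2 +
          (1 / 2) * (∫ x, x * Real.sin (x * γ) ∂ν) * (∫ x, Real.cos (x * γ) ∂ν) ^ D) := by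
  have hcard : (Fintype.card (EdgeIdx G) : ℝ) = n * (D + 1) / 2 := by
    rw [eq_div_iff two_ne_zero, mul_comm]
    exact_mod_cast EdgeIdx.two_mul_card hreg
  simp_rw [qaoaEnergy_eq_sum_edgeEnergy]
  rw [integral_finsetSum _ fun e _ => integrable_edgeEnergy hint e]
  simp_rw [integral_edgeEnergy hint hreg]
  rw [Finset.sum_const, Finset.card_univ, nsmul_eq_mul, hcard]

/-- For i.i.d. integrable edge weights with distribution `ν` and nonzero mean on a
triangle-free `(D+1)`-regular graph on `N` vertices, the expected `p = 1` QAOA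
energy factorizes:
`E[⟨C(γ)⟩] = (N(D+1)/2)·(μ/2 + (1/2)·E[w·sin(wγ)]·(E[cos(wγ)])^D)`. -/
theorem expected_qaoa_energy_regular (G : SimpleGraph (Fin n)) [DecidableRel G.Adj]
    (D : ℕ) (htri : G.CliqueFree 3) (hreg : ∀ v, G.degree v = D + 1)
    (ν : Measure ℝ) [IsProbabilityMeasure ν]
    (hint : Integrable (fun x : ℝ => x) ν) (hμ : (∫ x, x ∂ν) ≠ 0) (γ : ℝ) :
    ∫ W, qaoaEnergy G γ W ∂(Measure.pi fun _ : EdgeIdx G => ν) =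
      ((n : ℝ) * (D + 1) / 2) *
        ((∫ x, x ∂ν) / 2 +
          (1 / 2) * (∫ x, x * Real.sin (x * γ) ∂ν) * (∫ x, Real.cos (x * γ) ∂ν) ^ D) :=
  expected_qaoa_energy_regular_general G D hreg ν hint γ
end
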